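/- If γ and γ' are two couplings of μ ∈ P(X) and ν ∈ P(Y) such that γ, γ', and (γ + γ')/2 are each concentrated on the graph of a measurable map from X to Y (pushing μ to ν), then γ = γ'. -/

import Mathlib

open MeasureTheory

/-! The midpoint `(γ + γ')/2` can give full mass to the graph `{y = T x}` only if both `γ` and
`γ'` do. A finite measure giving full (outer) mass to the graph of a measurable `T` is the
push-forward of its first marginal under `x ↦ (x, T x)`. As `γ` and `γ'` have the same first
marginal `μ`, both equal `μ.map (fun x ↦ (x, T x))`. -/

lemma ENNReal.eq_one_of_inv_two_mul_add_eq_one {a b : ENNReal} (ha : a ≤ 1) (hb : b ≤ 1)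
    (h : 2⁻¹ * (a + b) = 1) : a = 1 := by
  refine le_antisymm ha ((ENNReal.add_le_add_iff_right ENNReal.one_ne_top).mp ?_)
  calc 1 + 1 = 2 * (2⁻¹ * (a + b)) := by rw [h, mul_one, one_add_one_eq_two]
    _ = a + b := by
      rw [← mul_assoc, ENNReal.mul_inv_cancel two_ne_zero ENNReal.ofNat_ne_top, one_mul]
    _ ≤ a + 1 := by gcongr

lemma MeasureTheory.Measure.measure_eq_one_of_midpoint_measure_eq_one {α : Type*}
    [MeasurableSpace α] {γ γ' : Measure α} [IsProbabilityMeasure γ] [IsProbabilityMeasure γ']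
    {S : Set α} (h : ((2 : ENNReal)⁻¹ • (γ + γ')) S = 1) : γ S = 1 ∧ γ' S = 1 := by
  rw [Measure.smul_apply, Measure.add_apply, smul_eq_mul] at h
  exact ⟨ENNReal.eq_one_of_inv_two_mul_add_eq_one prob_le_one prob_le_one h,
    ENNReal.eq_one_of_inv_two_mul_add_eq_one prob_le_one prob_le_one (add_comm (γ S) _ ▸ h)⟩

lemma MeasureTheory.Measure.eq_map_fst_map_graph_of_measure_graph_eq {X Y : Type*}
    [MeasurableSpace X] [MeasurableSpace Y] {γ : Measure (X × Y)} [IsFiniteMeasure γ]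
    {T : X → Y} (hT : Measurable T) (hγ : γ {p | p.2 = T p.1} = γ Set.univ) :
    γ = (γ.map Prod.fst).map (fun x ↦ (x, T x)) := by
  have hgraph : Measurable (fun x ↦ (x, T x)) := measurable_id.prodMk hT
  ext E hE
  set M : Set (X × Y) := Prod.fst ⁻¹' ((fun x ↦ (x, T x)) ⁻¹' E)
  have hM : MeasurableSet M := measurable_fst (hgraph hE)
  have hEM : {p : X × Y | p.2 = T p.1} ∩ E = {p | p.2 = T p.1} ∩ M := by
    ext ⟨x, y⟩
    simp only [M, Set.mem_inter_iff, Set.mem_ofPred_eq, Set.mem_preimage]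
    constructor <;> rintro ⟨rfl, h⟩ <;> exact ⟨rfl, h⟩
  have hfull {s : Set (X × Y)} (hs : MeasurableSet s) : γ ({p | p.2 = T p.1} ∩ s) = γ s := by
    rw [measure_inter_eq_of_measure_eq hs hγ (Set.subset_univ _) (measure_ne_top _ _),
      Set.univ_inter]
  rw [Measure.map_apply hgraph hE, Measure.map_apply measurable_fst (hgraph hE), ← hfull hE,
    hEM, hfull hM]

theorem stmt7_general {X Y : Type*}
    [MeasurableSpace X] [MeasurableSpace Y]
    (μ : Measure X) (ν : Measure Y) [IsProbabilityMeasure μ]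
    (γ γ' : Measure (X × Y))
    (hγ₁ : γ.map Prod.fst = μ)
    (hγ'₁ : γ'.map Prod.fst = μ)
    (hmid : ∃ T : X → Y, Measurable T ∧ μ.map T = ν ∧
      ((2 : ENNReal)⁻¹ • (γ + γ')) {p | p.2 = T p.1} = 1) :
    γ = γ' := by
  have : IsProbabilityMeasure (γ.map Prod.fst) := hγ₁ ▸ inferInstance
  have : IsProbabilityMeasure (γ'.map Prod.fst) := hγ'₁ ▸ inferInstance
  have : IsProbabilityMeasure γ := Measure.isProbabilityMeasure_of_map Prod.fst
  have : IsProbabilityMeasure γ' := Measure.isProbabilityMeasure_of_map Prod.fst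
  obtain ⟨T, hT, -, hmid⟩ := hmid
  obtain ⟨hγT, hγ'T⟩ := Measure.measure_eq_one_of_midpoint_measure_eq_one hmid
  rw [Measure.eq_map_fst_map_graph_of_measure_graph_eq hT (hγT.trans measure_univ.symm),
    Measure.eq_map_fst_map_graph_of_measure_graph_eq hT (hγ'T.trans measure_univ.symm), hγ₁, hγ'₁]

/-- If two couplings `γ, γ'` of `μ` and `ν`, as well as their midpoint `(γ + γ')/2`, are
each concentrated on the graph of a measurable map pushing `μ` to `ν`, then `γ = γ'`. -/
theorem stmt7 {X Y : Type*}
    [MeasurableSpace X] [MeasurableSpace Y]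
    (μ : Measure X) (ν : Measure Y) [IsProbabilityMeasure μ] [IsProbabilityMeasure ν]
    (γ γ' : Measure (X × Y))
    (hγ₁ : γ.map Prod.fst = μ) (hγ₂ : γ.map Prod.snd = ν)
    (hγ'₁ : γ'.map Prod.fst = μ) (hγ'₂ : γ'.map Prod.snd = ν)
    (hγ : ∃ T : X → Y, Measurable T ∧ μ.map T = ν ∧ γ {p | p.2 = T p.1} = 1)
    (hγ' : ∃ T : X → Y, Measurable T ∧ μ.map T = ν ∧ γ' {p | p.2 = T p.1} = 1)
    (hmid : ∃ T : X → Y, Measurable T ∧ μ.map T = ν ∧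
      ((2 : ENNReal)⁻¹ • (γ + γ')) {p | p.2 = T p.1} = 1) :
    γ = γ' :=
  stmt7_general μ ν γ γ' hγ₁ hγ'₁ hmid
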